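/- arXiv:1403.2543 — 2 statements merged into one kernel-verified Lean document; each statement's English description precedes it below -/
import Mathlib

section
/- Data-processing inequality: let ρ be a state and σ a positive definite matrix on ℂ^d, let ε ∈ (0,1), and let Λ be a CPTP map in Kraus form from d×d matrices to d'×d' matrices. Then D̲_s^ε(Λ(ρ)‖Λ(σ)) ≤ D̲_s^ε(ρ‖σ) and D̄_s^ε(Λ(ρ)‖Λ(σ)) ≤ D̄_s^ε(ρ‖σ), where in case Λ(σ) is singular each defining supremum/infimum is taken in the extended reals. -/
open Matrix
open scoped ComplexOrder

noncomputable section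

/-- Positive part `C₊` of a Hermitian matrix, obtained by applying `x ↦ max x 0` to the
eigenvalues in a spectral decomposition (junk value `0` for non-Hermitian input). -/
def matPos {n : Type*} [Fintype n] [DecidableEq n] (A : Matrix n n ℂ) : Matrix n n ℂ :=
  if hA : A.IsHermitian then
    (hA.eigenvectorUnitary : Matrix n n ℂ) *
      Matrix.diagonal (fun i => ((max (hA.eigenvalues i) 0 : ℝ) : ℂ)) *
      star (hA.eigenvectorUnitary : Matrix n n ℂ)
  else 0

/-- `Tr C₊` as a real number. -/
def trPos {n : Type*} [Fintype n] [DecidableEq n] (A : Matrix n n ℂ) : ℝ :=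
  (matPos A).trace.re

/-- Spectral projection of a Hermitian matrix onto `[0, ∞)` (junk value `0` for
non-Hermitian input). -/
def projNonneg {n : Type*} [Fintype n] [DecidableEq n] (A : Matrix n n ℂ) : Matrix n n ℂ :=
  if hA : A.IsHermitian then
    (hA.eigenvectorUnitary : Matrix n n ℂ) *
      Matrix.diagonal (fun i => if 0 ≤ hA.eigenvalues i then (1 : ℂ) else 0) *
      star (hA.eigenvectorUnitary : Matrix n n ℂ)
  else 0

/-- The information spectrum relative entropy `D̲_s^ε(ρ‖σ)`, with the supremum taken in the
extended reals. -/
def DlowE {n : Type*} [Fintype n] [DecidableEq n] (ε : ℝ) (ρ σ : Matrix n n ℂ) : EReal :=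
  sSup (Real.toEReal '' {γ : ℝ | 1 - ε ≤ trPos (ρ - (2 : ℝ) ^ γ • σ)})

/-- The information spectrum relative entropy `D̄_s^ε(ρ‖σ)`, with the infimum taken in the
extended reals. -/
def DhighE {n : Type*} [Fintype n] [DecidableEq n] (ε : ℝ) (ρ σ : Matrix n n ℂ) : EReal :=
  sInf (Real.toEReal '' {γ : ℝ | trPos (ρ - (2 : ℝ) ^ γ • σ) ≤ ε})

/-!
Since `Λ` is linear, `Λ(ρ) - 2^γ Λ(σ) = Λ(ρ - 2^γ σ)`, so both inequalities follow from
`Tr Λ(A)₊ ≤ Tr A₊` for Hermitian `A`: it enlarges the set defining `D̲` and shrinks the one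
defining `D̄`. That inequality is duality: `Tr A₊` is the maximum of `Re Tr (M A)` over
`0 ≤ M ≤ 1`, and with `P` the spectral projection of `Λ(A)` onto `[0, ∞)`,
`Tr Λ(A)₊ = Tr (P Λ(A)) = Tr (Λ*(P) A)`, where the dual map `Λ*(M) = ∑ Kᵢᴴ M Kᵢ` keeps
`0 ≤ Λ*(P) ≤ 1`.
-/

namespace Matrix

variable {n : Type*} [Fintype n]

lemma PosSemidef.trace_mul_nonneg {P Q : Matrix n n ℂ} (hP : P.PosSemidef) (hQ : Q.PosSemidef) :
    0 ≤ (P * Q).trace := by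
  classical
  obtain ⟨C, rfl⟩ : ∃ C : Matrix n n ℂ, Q = Cᴴ * C := by
    open scoped MatrixOrder in exact CStarAlgebra.nonneg_iff_eq_star_mul_self.mp hQ.nonneg
  rw [← Matrix.mul_assoc, trace_mul_cycle]
  exact (hP.mul_mul_conjTranspose_same C).trace_nonneg

variable [DecidableEq n]

namespace IsHermitian

variable {A : Matrix n n ℂ}

def conjDiagonal (hA : A.IsHermitian) (f : n → ℂ) : Matrix n n ℂ :=
  (hA.eigenvectorUnitary : Matrix n n ℂ) * diagonal f * star (hA.eigenvectorUnitary : Matrix n n ℂ)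

lemma conjDiagonal_sub (hA : A.IsHermitian) (f g : n → ℂ) :
    hA.conjDiagonal f - hA.conjDiagonal g = hA.conjDiagonal (f - g) := by
  rw [conjDiagonal, conjDiagonal, conjDiagonal, ← sub_mul, ← mul_sub, diagonal_sub]
  rfl

lemma conjDiagonal_mul (hA : A.IsHermitian) (f g : n → ℂ) :
    hA.conjDiagonal f * hA.conjDiagonal g = hA.conjDiagonal (f * g) := by
  have hU : star (hA.eigenvectorUnitary : Matrix n n ℂ) * hA.eigenvectorUnitary = 1 :=
    Unitary.coe_star_mul_self _
  simp only [conjDiagonal, Matrix.mul_assoc, ← Matrix.mul_assoc (star _) _ (diagonal g * _), hU,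
    Matrix.one_mul, ← Matrix.mul_assoc (diagonal f), diagonal_mul_diagonal]
  rfl

lemma conjDiagonal_one (hA : A.IsHermitian) : hA.conjDiagonal 1 = 1 := by
  rw [conjDiagonal, Pi.one_def, diagonal_one, Matrix.mul_one]
  exact Unitary.mul_star_self_of_mem hA.eigenvectorUnitary.2

lemma conjDiagonal_eigenvalues (hA : A.IsHermitian) :
    hA.conjDiagonal (fun i => (hA.eigenvalues i : ℂ)) = A := by
  conv_rhs => rw [hA.spectral_theorem]
  rfl

lemma conjDiagonal_posSemidef (hA : A.IsHermitian) {f : n → ℂ} (hf : ∀ i, 0 ≤ f i) :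
    (hA.conjDiagonal f).PosSemidef := by
  rw [conjDiagonal, star_eq_conjTranspose]
  exact (posSemidef_diagonal_iff.mpr hf).mul_mul_conjTranspose_same _

end IsHermitian

end Matrix

section PositivePart

variable {n : Type*} [Fintype n] [DecidableEq n] {A : Matrix n n ℂ}

lemma matPos_eq_conjDiagonal (hA : A.IsHermitian) :
    matPos A = hA.conjDiagonal (fun i => ((max (hA.eigenvalues i) 0 : ℝ) : ℂ)) := by
  rw [matPos, dif_pos hA]
  rfl

lemma projNonneg_eq_conjDiagonal (hA : A.IsHermitian) :
    projNonneg A = hA.conjDiagonal (fun i => if 0 ≤ hA.eigenvalues i then 1 else 0) := by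
  rw [projNonneg, dif_pos hA]
  rfl

lemma matPos_posSemidef (hA : A.IsHermitian) : (matPos A).PosSemidef := by
  rw [matPos_eq_conjDiagonal hA]
  exact hA.conjDiagonal_posSemidef fun i => Complex.zero_le_real.mpr (le_max_right _ _)

lemma matPos_sub_self_posSemidef (hA : A.IsHermitian) : (matPos A - A).PosSemidef := by
  have h : matPos A - A = hA.conjDiagonal (fun i => ((max (hA.eigenvalues i) 0 : ℝ) : ℂ)) -
      hA.conjDiagonal (fun i => (hA.eigenvalues i : ℂ)) := by
    rw [hA.conjDiagonal_eigenvalues, matPos_eq_conjDiagonal hA]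
  rw [h, hA.conjDiagonal_sub]
  refine hA.conjDiagonal_posSemidef fun i => ?_
  simp only [Pi.sub_apply, sub_nonneg]
  exact_mod_cast le_max_left _ _

lemma projNonneg_posSemidef (hA : A.IsHermitian) : (projNonneg A).PosSemidef := by
  rw [projNonneg_eq_conjDiagonal hA]
  exact hA.conjDiagonal_posSemidef fun i => by split_ifs <;> simp

lemma one_sub_projNonneg_posSemidef (hA : A.IsHermitian) : (1 - projNonneg A).PosSemidef := by
  rw [projNonneg_eq_conjDiagonal hA, ← hA.conjDiagonal_one, hA.conjDiagonal_sub]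
  exact hA.conjDiagonal_posSemidef fun i => by simp only [Pi.sub_apply]; split_ifs <;> simp

lemma projNonneg_mul_self (hA : A.IsHermitian) : projNonneg A * A = matPos A := by
  have h : projNonneg A * A = hA.conjDiagonal (fun i => if 0 ≤ hA.eigenvalues i then 1 else 0) *
      hA.conjDiagonal (fun i => (hA.eigenvalues i : ℂ)) := by
    rw [hA.conjDiagonal_eigenvalues, projNonneg_eq_conjDiagonal hA]
  rw [h, hA.conjDiagonal_mul, matPos_eq_conjDiagonal hA]
  congr 1
  funext i
  simp only [Pi.mul_apply]
  split_ifs with h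
  · simp [max_eq_left h]
  · simp [max_eq_right (le_of_not_ge h)]

lemma re_trace_mul_le_trPos {M : Matrix n n ℂ} (hA : A.IsHermitian) (hM : M.PosSemidef)
    (hM1 : (1 - M).PosSemidef) : (M * A).trace.re ≤ trPos A := by
  have h_neg : 0 ≤ (M * (matPos A - A)).trace.re :=
    (Complex.le_def.mp (hM.trace_mul_nonneg (matPos_sub_self_posSemidef hA))).1
  have h_pos : 0 ≤ ((1 - M) * matPos A).trace.re :=
    (Complex.le_def.mp (hM1.trace_mul_nonneg (matPos_posSemidef hA))).1
  simp only [Matrix.mul_sub, Matrix.sub_mul, Matrix.one_mul, trace_sub, Complex.sub_re]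
    at h_neg h_pos
  rw [trPos]
  linarith

lemma trPos_eq_re_trace_projNonneg_mul (hA : A.IsHermitian) :
    trPos A = (projNonneg A * A).trace.re := by
  rw [trPos, projNonneg_mul_self hA]

end PositivePart

section Kraus

variable {n m ι : Type*} [Fintype n] [Fintype ι] (K : ι → Matrix m n ℂ)

lemma isHermitian_kraus {A : Matrix n n ℂ} (hA : A.IsHermitian) :
    (∑ i, K i * A * (K i)ᴴ).IsHermitian :=
  isSelfAdjoint_sum _ fun i _ => isHermitian_mul_mul_conjTranspose (K i) hA

lemma kraus_sub_smul (A B : Matrix n n ℂ) (c : ℝ) :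
    ∑ i, K i * A * (K i)ᴴ - c • ∑ i, K i * B * (K i)ᴴ = ∑ i, K i * (A - c • B) * (K i)ᴴ := by
  simp only [Finset.smul_sum, ← Finset.sum_sub_distrib, Matrix.mul_sub, Matrix.sub_mul,
    Matrix.mul_smul, Matrix.smul_mul]

variable [Fintype m]

lemma trace_mul_kraus (Q : Matrix m m ℂ) (A : Matrix n n ℂ) :
    (Q * ∑ i, K i * A * (K i)ᴴ).trace = ((∑ i, (K i)ᴴ * Q * K i) * A).trace := by
  simp only [Matrix.mul_sum, Matrix.sum_mul, trace_sum]
  refine Finset.sum_congr rfl fun i _ => ?_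
  rw [← Matrix.mul_assoc, ← Matrix.mul_assoc, trace_mul_comm]
  simp only [Matrix.mul_assoc]

lemma posSemidef_kraus_dual {Q : Matrix m m ℂ} (hQ : Q.PosSemidef) :
    (∑ i, (K i)ᴴ * Q * K i).PosSemidef :=
  posSemidef_sum _ fun i _ => hQ.conjTranspose_mul_mul_same (K i)

lemma one_sub_kraus_dual_posSemidef [DecidableEq n] [DecidableEq m]
    (hK : (1 - ∑ i, (K i)ᴴ * K i).PosSemidef) {Q : Matrix m m ℂ}
    (hQ1 : (1 - Q).PosSemidef) : (1 - ∑ i, (K i)ᴴ * Q * K i).PosSemidef := by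
  have h : 1 - ∑ i, (K i)ᴴ * Q * K i =
      (1 - ∑ i, (K i)ᴴ * K i) + ∑ i, (K i)ᴴ * (1 - Q) * K i := by
    simp only [Matrix.mul_sub, Matrix.sub_mul, Matrix.mul_one, Finset.sum_sub_distrib]
    abel
  rw [h]
  exact hK.add (posSemidef_kraus_dual K hQ1)

lemma trPos_kraus_le [DecidableEq n] [DecidableEq m] (hK : (1 - ∑ i, (K i)ᴴ * K i).PosSemidef)
    {A : Matrix n n ℂ} (hA : A.IsHermitian) : trPos (∑ i, K i * A * (K i)ᴴ) ≤ trPos A := by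
  have hB := isHermitian_kraus K hA
  rw [trPos_eq_re_trace_projNonneg_mul hB, trace_mul_kraus]
  exact re_trace_mul_le_trPos hA (posSemidef_kraus_dual K (projNonneg_posSemidef hB))
    (one_sub_kraus_dual_posSemidef K hK (one_sub_projNonneg_posSemidef hB))

end Kraus

section InformationSpectrum

variable {n m : Type*} [Fintype n] [DecidableEq n] [Fintype m] [DecidableEq m] {ε : ℝ}
  {ρ σ : Matrix n n ℂ} {ρ' σ' : Matrix m m ℂ}

lemma DlowE_le_of_trPos_le
    (h : ∀ γ : ℝ, trPos (ρ' - (2 : ℝ) ^ γ • σ') ≤ trPos (ρ - (2 : ℝ) ^ γ • σ)) :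
    DlowE ε ρ' σ' ≤ DlowE ε ρ σ :=
  sSup_le_sSup (Set.image_mono fun γ hγ => le_trans hγ (h γ))

lemma DhighE_le_of_trPos_le
    (h : ∀ γ : ℝ, trPos (ρ' - (2 : ℝ) ^ γ • σ') ≤ trPos (ρ - (2 : ℝ) ^ γ • σ)) :
    DhighE ε ρ' σ' ≤ DhighE ε ρ σ :=
  sInf_le_sInf (Set.image_mono fun γ hγ => le_trans (h γ) hγ)

end InformationSpectrum

theorem Dlow_Dhigh_data_processing_general {d d' : ℕ} (ρ σ : Matrix (Fin d) (Fin d) ℂ)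
    (hρ : ρ.PosSemidef) (hσ : σ.PosDef)
    (ε : ℝ)
    {ι : Type} [Fintype ι] (K : ι → Matrix (Fin d') (Fin d) ℂ)
    (hK : ∑ i, (K i)ᴴ * K i = (1 : Matrix (Fin d) (Fin d) ℂ)) :
    DlowE ε (∑ i, K i * ρ * (K i)ᴴ) (∑ i, K i * σ * (K i)ᴴ) ≤ DlowE ε ρ σ ∧
      DhighE ε (∑ i, K i * ρ * (K i)ᴴ) (∑ i, K i * σ * (K i)ᴴ) ≤ DhighE ε ρ σ := by
  have hK' : (1 - ∑ i, (K i)ᴴ * K i).PosSemidef := by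
    rw [hK, sub_self]
    exact .zero
  have h_trPos : ∀ γ : ℝ, trPos (∑ i, K i * ρ * (K i)ᴴ - (2 : ℝ) ^ γ • ∑ i, K i * σ * (K i)ᴴ)
      ≤ trPos (ρ - (2 : ℝ) ^ γ • σ) := fun γ => by
    rw [kraus_sub_smul]
    exact trPos_kraus_le K hK' (hρ.1.sub (hσ.1.smul (IsSelfAdjoint.all _)))
  exact ⟨DlowE_le_of_trPos_le h_trPos, DhighE_le_of_trPos_le h_trPos⟩

/-- Data-processing inequality for the information spectrum relative entropies: for a CPTP map
`Λ` in Kraus form, `D̲_s^ε(Λ(ρ)‖Λ(σ)) ≤ D̲_s^ε(ρ‖σ)` and `D̄_s^ε(Λ(ρ)‖Λ(σ)) ≤ D̄_s^ε(ρ‖σ)`. -/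
theorem Dlow_Dhigh_data_processing {d d' : ℕ} (ρ σ : Matrix (Fin d) (Fin d) ℂ)
    (hρ : ρ.PosSemidef) (hρtr : ρ.trace = 1) (hσ : σ.PosDef)
    (ε : ℝ) (hε0 : 0 < ε) (hε1 : ε < 1)
    {ι : Type} [Fintype ι] (K : ι → Matrix (Fin d') (Fin d) ℂ)
    (hK : ∑ i, (K i)ᴴ * K i = (1 : Matrix (Fin d) (Fin d) ℂ)) :
    DlowE ε (∑ i, K i * ρ * (K i)ᴴ) (∑ i, K i * σ * (K i)ᴴ) ≤ DlowE ε ρ σ ∧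
      DhighE ε (∑ i, K i * ρ * (K i)ᴴ) (∑ i, K i * σ * (K i)ᴴ) ≤ DhighE ε ρ σ :=
  Dlow_Dhigh_data_processing_general ρ σ hρ hσ ε K hK
end
end

section
/- Recovery of the spectral divergence rates: fix d ≥ 1, and for each n ∈ ℕ let ρ_n be a state and ω_n a positive semidefinite matrix on (ℂ^d)^{⊗n}. Define the quantum spectral inf- and sup-divergence rates D̲(ρ̂‖ω̂) := sup{γ ∈ ℝ : liminf_{n→∞} Tr(ρ_n − 2^{nγ} ω_n)₊ = 1} and D̄(ρ̂‖ω̂) := inf{γ ∈ ℝ : limsup_{n→∞} Tr(ρ_n − 2^{nγ} ω_n)₊ = 0}. Then, with all suprema/infima taken in the extended reals, lim_{ε→0⁺} liminf_{n→∞} (1/n) D̲_s^ε(ρ_n‖ω_n) = D̲(ρ̂‖ω̂) and lim_{ε→0⁺} limsup_{n→∞} (1/n) D̄_s^ε(ρ_n‖ω_n) = D̄(ρ̂‖ω̂). -/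
/-!
`c ↦ Tr(ρ - c ω)₊` is antitone: `Tr C₊ = Re Tr(P C)` for the spectral projection `P` of `C` onto
`[0, ∞)`, while `Re Tr(P C) ≤ Tr C₊` for every `0 ≤ P ≤ 1`, so `Tr(·)₊` is monotone in the Loewner
order; for a state `ρ` and `c ≥ 0` its values lie in `[0, 1]`. Hence the sets defining `D̲_s^ε` are
half-lines, and `γ < (1/n) D̲_s^ε(ρ_n‖ω_n)` forces `Tr(ρ_n - 2^{nγ} ω_n)₊ ≥ 1 - ε`. A real `γ` is
therefore below `liminf_n (1/n) D̲_s^ε(ρ_n‖ω_n)` for every `ε > 0` exactly when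
`Tr(ρ_n - 2^{nγ} ω_n)₊ → 1`. These rates are monotone in `ε`, so their limit at `0⁺` is their
infimum, which is then the supremum of such `γ`. The sup-divergence statement is the mirror image
of this one under `γ ↦ -γ`.
-/

open Matrix
open scoped ComplexOrder

noncomputable section

open Filter Set Topology
open scoped MatrixOrder

section PositivePart

variable {ι : Type*} [Fintype ι] [DecidableEq ι] {A B P σ : Matrix ι ι ℂ}

theorem matPos_eq_cfc (hA : A.IsHermitian) : matPos A = cfc (fun x : ℝ => max x 0) A := by
  rw [hA.cfc_eq, IsHermitian.cfc, matPos, dif_pos hA, Unitary.conjStarAlgAut_apply]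
  rfl

theorem projNonneg_eq_cfc (hA : A.IsHermitian) :
    projNonneg A = cfc (fun x : ℝ => if 0 ≤ x then 1 else 0) A := by
  rw [hA.cfc_eq, IsHermitian.cfc, projNonneg, dif_pos hA, Unitary.conjStarAlgAut_apply]
  congr 3
  ext i
  split_ifs <;> simp [*]

theorem matPos_eq_projNonneg_mul (hA : A.IsHermitian) : matPos A = projNonneg A * A := by
  rw [matPos_eq_cfc hA, projNonneg_eq_cfc hA]
  nth_rw 3 [← cfc_id' ℝ A]
  rw [← cfc_mul _ _ _ (A.finite_real_spectrum.continuousOn _)]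
  congr 1
  ext x
  split_ifs with hx
  · rw [one_mul, max_eq_left hx]
  · rw [zero_mul, max_eq_right (not_le.1 hx).le]

theorem matPos_of_posSemidef (hA : A.PosSemidef) : matPos A = A := by
  rw [matPos_eq_cfc hA.isHermitian]
  exact (cfc_congr fun x hx => max_eq_left (spectrum_nonneg_of_nonneg hA.nonneg hx)).trans
    (cfc_id' ℝ A)

theorem matPos_nonneg (hA : A.IsHermitian) : 0 ≤ matPos A := by
  rw [matPos_eq_cfc hA]
  exact cfc_nonneg fun x _ => le_max_right x 0

theorem le_matPos (hA : A.IsHermitian) : A ≤ matPos A := by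
  rw [matPos_eq_cfc hA]
  nth_rw 1 [← cfc_id' ℝ A]
  exact cfc_mono fun x _ => le_max_left x 0

theorem projNonneg_nonneg (hA : A.IsHermitian) : 0 ≤ projNonneg A := by
  rw [projNonneg_eq_cfc hA]
  exact cfc_nonneg fun x _ => by split_ifs <;> norm_num

theorem projNonneg_le_one (hA : A.IsHermitian) : projNonneg A ≤ 1 := by
  rw [projNonneg_eq_cfc hA]
  exact cfc_le_one _ _ fun x _ => by split_ifs <;> norm_num

theorem trace_mul_nonneg (hP : 0 ≤ P) (hσ : 0 ≤ σ) : 0 ≤ (P * σ).trace := by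
  obtain ⟨C, rfl⟩ := CStarAlgebra.nonneg_iff_eq_star_mul_self.mp hσ
  rw [← mul_assoc, trace_mul_comm, ← mul_assoc]
  exact (Matrix.nonneg_iff_posSemidef.1 (star_right_conjugate_nonneg hP C)).trace_nonneg

theorem trace_mul_le_trace_matPos (hA : A.IsHermitian) (hP₀ : 0 ≤ P) (hP₁ : P ≤ 1) :
    (P * A).trace ≤ (matPos A).trace :=
  calc (P * A).trace = (P * matPos A).trace - (P * (matPos A - A)).trace := by
        rw [Matrix.mul_sub, trace_sub, sub_sub_cancel]
    _ ≤ (P * matPos A).trace :=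
        sub_le_self _ (trace_mul_nonneg hP₀ (sub_nonneg.2 (le_matPos hA)))
    _ = (matPos A).trace - ((1 - P) * matPos A).trace := by
        rw [Matrix.sub_mul, Matrix.one_mul, trace_sub, sub_sub_cancel]
    _ ≤ (matPos A).trace :=
        sub_le_self _ (trace_mul_nonneg (sub_nonneg.2 hP₁) (matPos_nonneg hA))

theorem trPos_mono (hA : A.IsHermitian) (hAB : A ≤ B) : trPos A ≤ trPos B := by
  have hB : B.IsHermitian := by
    simpa using hA.add (Matrix.nonneg_iff_posSemidef.1 (sub_nonneg.2 hAB)).isHermitian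
  have hP₀ := projNonneg_nonneg hA
  suffices (matPos A).trace ≤ (matPos B).trace from (Complex.le_def.1 this).1
  calc (matPos A).trace = (projNonneg A * A).trace := by rw [matPos_eq_projNonneg_mul hA]
    _ ≤ (projNonneg A * B).trace := by
        rw [← sub_nonneg, ← trace_sub, ← Matrix.mul_sub]
        exact trace_mul_nonneg hP₀ (sub_nonneg.2 hAB)
    _ ≤ (matPos B).trace := trace_mul_le_trace_matPos hB hP₀ (projNonneg_le_one hA)

theorem trPos_nonneg (A : Matrix ι ι ℂ) : 0 ≤ trPos A := by
  by_cases hA : A.IsHermitian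
  · simpa [trPos] using
      (Complex.le_def.1 (Matrix.nonneg_iff_posSemidef.1 (matPos_nonneg hA)).trace_nonneg).1
  · simp [trPos, matPos, hA]

theorem trPos_of_posSemidef (hA : A.PosSemidef) : trPos A = A.trace.re := by
  rw [trPos, matPos_of_posSemidef hA]

theorem trPos_sub_smul_antitone (hA : A.IsHermitian) (hσ : σ.PosSemidef) :
    Antitone fun c : ℝ => trPos (A - c • σ) := fun a b hab =>
  trPos_mono (hA.sub (hσ.isHermitian.smul (IsSelfAdjoint.all b))) <| by
    rw [Matrix.le_iff, sub_sub_sub_cancel_left, ← sub_smul]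
    exact hσ.smul (sub_nonneg.2 hab)

theorem trPos_sub_smul_le_one (hA : A.PosSemidef) (hA₁ : A.trace = 1) (hσ : σ.PosSemidef)
    {c : ℝ} (hc : 0 ≤ c) : trPos (A - c • σ) ≤ 1 := by
  simpa [trPos_of_posSemidef hA, hA₁] using trPos_sub_smul_antitone hA.isHermitian hσ hc

end PositivePart

theorem EReal.sSup_neg_image (s : Set EReal) : sSup (Neg.neg '' s) = -sInf s := by
  rw [sSup_image]
  exact (EReal.negOrderIso.map_sInf s).symm

theorem EReal.sSup_coe_image_neg (s : Set ℝ) :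
    sSup (Real.toEReal '' (-s)) = -sInf (Real.toEReal '' s) := by
  rw [← EReal.sSup_neg_image, ← Set.image_neg_eq_neg, image_image, image_image]
  simp only [EReal.coe_neg]

section InvMulSSup

variable {c γ : ℝ} {s : Set ℝ}

theorem EReal.coe_eq_inv_mul_coe_mul (hc : c ≠ 0) :
    (γ : EReal) = ((c⁻¹ : ℝ) : EReal) * ((c * γ : ℝ) : EReal) := by
  rw [← EReal.coe_mul, inv_mul_cancel_left₀ hc]

theorem coe_le_inv_mul_sSup (hc : 0 < c) (h : c * γ ∈ s) :
    (γ : EReal) ≤ ((c⁻¹ : ℝ) : EReal) * sSup (Real.toEReal '' s) := by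
  rw [EReal.coe_eq_inv_mul_coe_mul hc.ne']
  exact mul_le_mul_of_nonneg_left (le_sSup (mem_image_of_mem _ h))
    (EReal.coe_nonneg.2 (inv_nonneg.2 hc.le))

theorem mul_mem_of_coe_lt_inv_mul_sSup (hc : 0 < c) (hs : IsLowerSet s)
    (h : (γ : EReal) < ((c⁻¹ : ℝ) : EReal) * sSup (Real.toEReal '' s)) : c * γ ∈ s := by
  by_contra hγ
  have hle : sSup (Real.toEReal '' s) ≤ ((c * γ : ℝ) : EReal) := sSup_le <| by
    rintro _ ⟨b, hb, rfl⟩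
    exact EReal.coe_le_coe_iff.2 (le_of_not_ge fun hγb => hγ (hs hγb hb))
  rw [EReal.coe_eq_inv_mul_coe_mul hc.ne'] at h
  exact h.not_ge (mul_le_mul_of_nonneg_left hle (EReal.coe_nonneg.2 (inv_nonneg.2 hc.le)))

end InvMulSSup

theorem tendsto_liminf_inv_mul_sSup_of_isLowerSet (A : ℝ → ℕ → Set ℝ)
    (hA : ∀ ε n, IsLowerSet (A ε n)) (hmono : Monotone A) :
    Tendsto (fun ε => liminf (fun n : ℕ =>
        (((n : ℝ)⁻¹ : ℝ) : EReal) * sSup (Real.toEReal '' A ε n)) atTop) (𝓝[>] 0)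
      (𝓝 (sSup (Real.toEReal '' {γ | ∀ ε > 0, ∀ᶠ n : ℕ in atTop, (n : ℝ) * γ ∈ A ε n}))) := by
  set g := fun ε => liminf (fun n : ℕ =>
    (((n : ℝ)⁻¹ : ℝ) : EReal) * sSup (Real.toEReal '' A ε n)) atTop
  have hg : Monotone g := fun ε ε' hεε' => liminf_le_liminf <| .of_forall fun n =>
    mul_le_mul_of_nonneg_left (sSup_le_sSup (image_mono (hmono hεε' n)))
      (EReal.coe_nonneg.2 (inv_nonneg.2 n.cast_nonneg))
  suffices sInf (g '' Ioi 0) = sSup (Real.toEReal '' _) from this ▸ hg.tendsto_nhdsGT 0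
  refine le_antisymm (EReal.ge_of_forall_gt_iff_ge.1 fun γ hγ => le_sSup ⟨γ, ?_, rfl⟩) ?_
  · intro ε hε
    have hγε : (γ : EReal) < g ε := hγ.trans_le (sInf_le ⟨ε, hε, rfl⟩)
    filter_upwards [eventually_lt_of_lt_liminf hγε, eventually_gt_atTop 0] with n hn hpos
    exact mul_mem_of_coe_lt_inv_mul_sSup (Nat.cast_pos.2 hpos) (hA ε n) hn
  · refine le_sInf ?_
    rintro _ ⟨ε, hε, rfl⟩
    refine sSup_le ?_
    rintro _ ⟨γ, hγ, rfl⟩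
    refine le_liminf_of_le (by isBoundedDefault) ?_
    filter_upwards [hγ ε hε, eventually_gt_atTop 0] with n hn hpos
    exact coe_le_inv_mul_sSup (Nat.cast_pos.2 hpos) hn

theorem tendsto_limsup_inv_mul_sInf_of_isUpperSet (B : ℝ → ℕ → Set ℝ)
    (hB : ∀ ε n, IsUpperSet (B ε n)) (hmono : Monotone B) :
    Tendsto (fun ε => limsup (fun n : ℕ =>
        (((n : ℝ)⁻¹ : ℝ) : EReal) * sInf (Real.toEReal '' B ε n)) atTop) (𝓝[>] 0)
      (𝓝 (sInf (Real.toEReal '' {γ | ∀ ε > 0, ∀ᶠ n : ℕ in atTop, (n : ℝ) * γ ∈ B ε n}))) := by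
  have hneg := (tendsto_liminf_inv_mul_sSup_of_isLowerSet (fun ε n => -B ε n)
    (fun ε n => (hB ε n).neg) fun ε ε' h n => Set.neg_subset_neg.2 (hmono h n)).neg
  have hset : {γ : ℝ | ∀ ε > 0, ∀ᶠ n : ℕ in atTop, (n : ℝ) * γ ∈ -B ε n}
      = -{γ | ∀ ε > 0, ∀ᶠ n : ℕ in atTop, (n : ℝ) * γ ∈ B ε n} := by
    ext γ
    simp [mul_neg]
  rw [hset, EReal.sSup_coe_image_neg, neg_neg] at hneg
  refine hneg.congr fun ε => ?_
  simp only [EReal.sSup_coe_image_neg, mul_neg]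
  rw [← neg_neg (limsup _ _), ← EReal.liminf_neg]
  rfl

section ZeroOneSequences

variable {α : Type*} {f : Filter α} [f.NeBot] {u : α → ℝ}

theorem liminf_eq_one_iff (h₀ : ∀ x, 0 ≤ u x) (h₁ : ∀ x, u x ≤ 1) :
    liminf u f = 1 ↔ ∀ ε > 0, ∀ᶠ x in f, 1 - ε ≤ u x := by
  have hbdd : IsBoundedUnder (· ≥ ·) f u := isBoundedUnder_of ⟨0, h₀⟩
  refine ⟨fun h ε hε => (eventually_lt_of_lt_liminf (by linarith) hbdd).mono fun _ => le_of_lt,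
    fun h => le_antisymm ?_ ?_⟩
  · exact liminf_le_of_frequently_le (.of_forall h₁) hbdd
  · refine le_of_forall_pos_le_add fun ε hε => ?_
    have := le_liminf_of_le (isBoundedUnder_of ⟨1, h₁⟩).isCoboundedUnder_ge (h ε hε)
    linarith

theorem limsup_eq_zero_iff (h₀ : ∀ x, 0 ≤ u x) (h₁ : ∀ x, u x ≤ 1) :
    limsup u f = 0 ↔ ∀ ε > 0, ∀ᶠ x in f, u x ≤ ε := by
  have hbdd : IsBoundedUnder (· ≤ ·) f u := isBoundedUnder_of ⟨1, h₁⟩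
  refine ⟨fun h ε hε => (eventually_lt_of_limsup_lt (by linarith) hbdd).mono fun _ => le_of_lt,
    fun h => le_antisymm ?_ ?_⟩
  · refine le_of_forall_pos_le_add fun ε hε => ?_
    have := limsup_le_of_le (isBoundedUnder_of ⟨0, h₀⟩).isCoboundedUnder_le (h ε hε)
    linarith
  · exact le_limsup_of_frequently_le (.of_forall h₀) hbdd

end ZeroOneSequences

section SpectrumRates

variable (t : ℕ → ℝ → ℝ) (h₀ : ∀ n c, 0 ≤ t n c) (h₁ : ∀ n c, t n c ≤ 1)
  (ht : ∀ n, Antitone (t n))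
include h₀ h₁ ht

theorem tendsto_liminf_inv_mul_sSup_of_antitone :
    Tendsto (fun ε => liminf (fun n : ℕ =>
        (((n : ℝ)⁻¹ : ℝ) : EReal) * sSup (Real.toEReal '' {γ | 1 - ε ≤ t n γ})) atTop) (𝓝[>] 0)
      (𝓝 (sSup (Real.toEReal '' {γ | liminf (fun n : ℕ => t n ((n : ℝ) * γ)) atTop = 1}))) := by
  have hS : {γ | liminf (fun n : ℕ => t n ((n : ℝ) * γ)) atTop = 1}
      = {γ | ∀ ε > 0, ∀ᶠ n : ℕ in atTop, (n : ℝ) * γ ∈ {c | 1 - ε ≤ t n c}} :=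
    Set.ext fun γ => liminf_eq_one_iff (fun n => h₀ n _) (fun n => h₁ n _)
  rw [hS]
  exact tendsto_liminf_inv_mul_sSup_of_isLowerSet (fun ε n => {c | 1 - ε ≤ t n c})
    (fun ε n _ _ hba ha => ha.trans (ht n hba)) fun ε ε' h n c hc => (sub_le_sub_left h 1).trans hc

theorem tendsto_limsup_inv_mul_sInf_of_antitone :
    Tendsto (fun ε => limsup (fun n : ℕ =>
        (((n : ℝ)⁻¹ : ℝ) : EReal) * sInf (Real.toEReal '' {γ | t n γ ≤ ε})) atTop) (𝓝[>] 0)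
      (𝓝 (sInf (Real.toEReal '' {γ | limsup (fun n : ℕ => t n ((n : ℝ) * γ)) atTop = 0}))) := by
  have hT : {γ | limsup (fun n : ℕ => t n ((n : ℝ) * γ)) atTop = 0}
      = {γ | ∀ ε > 0, ∀ᶠ n : ℕ in atTop, (n : ℝ) * γ ∈ {c | t n c ≤ ε}} :=
    Set.ext fun γ => limsup_eq_zero_iff (fun n => h₀ n _) (fun n => h₁ n _)
  rw [hT]
  exact tendsto_limsup_inv_mul_sInf_of_isUpperSet (fun ε n => {c | t n c ≤ ε})
    (fun ε n _ _ hab ha => (ht n hab).trans ha) fun ε ε' h n c hc => hc.trans h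

end SpectrumRates

theorem spectral_divergence_recovery_general {d : ℕ}
    (ρ : (n : ℕ) → Matrix (Fin n → Fin d) (Fin n → Fin d) ℂ)
    (ω : (n : ℕ) → Matrix (Fin n → Fin d) (Fin n → Fin d) ℂ)
    (hρ : ∀ n, (ρ n).PosSemidef ∧ (ρ n).trace = 1)
    (hω : ∀ n, (ω n).PosSemidef) :
    Filter.Tendsto
        (fun ε : ℝ => Filter.liminf
          (fun n : ℕ => (((n : ℝ)⁻¹ : ℝ) : EReal) * DlowE ε (ρ n) (ω n)) Filter.atTop)
        (nhdsWithin 0 (Set.Ioi 0))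
        (nhds (sSup (Real.toEReal ''
          {γ : ℝ | Filter.liminf
              (fun n : ℕ => trPos (ρ n - (2 : ℝ) ^ ((n : ℝ) * γ) • ω n)) Filter.atTop = 1}))) ∧
      Filter.Tendsto
        (fun ε : ℝ => Filter.limsup
          (fun n : ℕ => (((n : ℝ)⁻¹ : ℝ) : EReal) * DhighE ε (ρ n) (ω n)) Filter.atTop)
        (nhdsWithin 0 (Set.Ioi 0))
        (nhds (sInf (Real.toEReal ''
          {γ : ℝ | Filter.limsup
              (fun n : ℕ => trPos (ρ n - (2 : ℝ) ^ ((n : ℝ) * γ) • ω n)) Filter.atTop = 0}))) := by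
  set t : ℕ → ℝ → ℝ := fun n c => trPos (ρ n - (2 : ℝ) ^ c • ω n)
  have h₀ : ∀ n c, 0 ≤ t n c := fun n c => trPos_nonneg _
  have h₁ : ∀ n c, t n c ≤ 1 := fun n c =>
    trPos_sub_smul_le_one (hρ n).1 (hρ n).2 (hω n) (Real.rpow_nonneg zero_le_two c)
  have ht : ∀ n, Antitone (t n) := fun n =>
    (trPos_sub_smul_antitone (hρ n).1.isHermitian (hω n)).comp_monotone
      (Real.monotone_rpow_of_base_ge_one one_le_two)
  exact ⟨tendsto_liminf_inv_mul_sSup_of_antitone t h₀ h₁ ht,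
    tendsto_limsup_inv_mul_sInf_of_antitone t h₀ h₁ ht⟩

/-- Recovery of the quantum spectral inf- and sup-divergence rates from the information
spectrum relative entropies: for arbitrary sequences of states `ρ_n` and positive semidefinite
operators `ω_n` on `(ℂ^d)^{⊗n}`,
`lim_{ε→0⁺} liminf_n (1/n) D̲_s^ε(ρ_n‖ω_n) = D̲(ρ̂‖ω̂)` and
`lim_{ε→0⁺} limsup_n (1/n) D̄_s^ε(ρ_n‖ω_n) = D̄(ρ̂‖ω̂)`, in the extended reals. -/
theorem spectral_divergence_recovery {d : ℕ} (hd : 1 ≤ d)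
    (ρ : (n : ℕ) → Matrix (Fin n → Fin d) (Fin n → Fin d) ℂ)
    (ω : (n : ℕ) → Matrix (Fin n → Fin d) (Fin n → Fin d) ℂ)
    (hρ : ∀ n, (ρ n).PosSemidef ∧ (ρ n).trace = 1)
    (hω : ∀ n, (ω n).PosSemidef) :
    Filter.Tendsto
        (fun ε : ℝ => Filter.liminf
          (fun n : ℕ => (((n : ℝ)⁻¹ : ℝ) : EReal) * DlowE ε (ρ n) (ω n)) Filter.atTop)
        (nhdsWithin 0 (Set.Ioi 0))
        (nhds (sSup (Real.toEReal ''
          {γ : ℝ | Filter.liminf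
              (fun n : ℕ => trPos (ρ n - (2 : ℝ) ^ ((n : ℝ) * γ) • ω n)) Filter.atTop = 1}))) ∧
      Filter.Tendsto
        (fun ε : ℝ => Filter.limsup
          (fun n : ℕ => (((n : ℝ)⁻¹ : ℝ) : EReal) * DhighE ε (ρ n) (ω n)) Filter.atTop)
        (nhdsWithin 0 (Set.Ioi 0))
        (nhds (sInf (Real.toEReal ''
          {γ : ℝ | Filter.limsup
              (fun n : ℕ => trPos (ρ n - (2 : ℝ) ^ ((n : ℝ) * γ) • ω n)) Filter.atTop = 0}))) :=
  spectral_divergence_recovery_general ρ ω hρ hω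
end
end
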